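/- Let R = μ₀R⁰ + Σ_{i=1}^m μᵢR^{Jᵢ} be an anti-Clifford algebraic curvature tensor on an n-dimensional scalar product space (V,g) (i.e. JᵢJⱼ + JⱼJᵢ = 2δᵢⱼ·id for all i,j) with μᵢ ≠ 0 for all 1 ≤ i ≤ m and n > 2m. Suppose there exist real numbers θ₀,θ₁,…,θ_m, not all zero, and a null vector X ≠ 0 such that θ₀·X + θ₁·J₁X + ⋯ + θ_m·J_mX = 0 and θ₀² = Σ_{i=1}^m θᵢ² = −μ₀·Σ_{i=1}^m θᵢ²/(3μᵢ). Then R is not totally Jacobi-dual. -/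

import Mathlib

/-! Call `Y` admissible when `3 μᵢ g(JᵢX, Y) = θᵢ` for all `i`. For admissible `Y`, the relation
`θ₀X + Σ θᵢJᵢX = 0` together with the conditions on `θ` gives `μ₀ g(X, Y) = θ₀`, and then
`𝒥_X Y = 0` while `𝒥_Y X = μ₀ ε_Y X + (K - θ₀)Y` with `K = Σ θᵢJᵢ`. Total Jacobi duality therefore
puts `(K - θ₀)Y` on the line `ℝX` for every admissible `Y`. The Clifford relations give
`(Σ aᵢJᵢ)² = Σ aᵢ²`, so the `JᵢX` are linearly independent and the admissible vectors form an affine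
subspace of codimension `m` missing `0`; hence `dim ker (K - θ₀) ≥ n - m`. But `ker (K - θ₀)` is an
eigenspace of the skew operator `K` for a nonzero eigenvalue, so it is totally isotropic and has
dimension at most `n / 2`. Thus `n ≤ 2m`. -/

open Module Finset

/-- The algebraic curvature tensor `R⁰` of constant sectional curvature one. -/
def R0 {V : Type*} [AddCommGroup V] [Module ℝ V] (g : LinearMap.BilinForm ℝ V)
    (X Y Z W : V) : ℝ :=
  g Y Z * g X W - g X Z * g Y W

/-- The algebraic curvature tensor `R^J` generated by a `g`-skew-adjoint endomorphism `J`. -/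
def RJ {V : Type*} [AddCommGroup V] [Module ℝ V] (g : LinearMap.BilinForm ℝ V)
    (J : V →ₗ[ℝ] V) (X Y Z W : V) : ℝ :=
  g (J X) Z * g (J Y) W - g (J Y) Z * g (J X) W + 2 * g (J X) Y * g (J Z) W

section LinearAlgebra

variable {K V W ι : Type*} [Field K] [AddCommGroup V] [Module K V] [FiniteDimensional K V]
  [AddCommGroup W] [Module K W]

theorem two_mul_finrank_le_of_isotropic {B : LinearMap.BilinForm K V} (hB : B.Nondegenerate)
    {N : Submodule K V} (hN : ∀ u ∈ N, ∀ v ∈ N, B u v = 0) :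
    2 * finrank K N ≤ finrank K V := by
  have hle : finrank K N ≤ finrank K (B.orthogonal N) :=
    Submodule.finrank_mono fun v hv u hu => hN u hu v hv
  rw [LinearMap.BilinForm.finrank_orthogonal hB] at hle
  have := N.finrank_le
  omega

theorem surjective_pi_apply_of_linearIndependent [Fintype ι] {B : LinearMap.BilinForm K V}
    (hB : B.Nondegenerate) {v : ι → V} (hv : LinearIndependent K v) :
    Function.Surjective (LinearMap.pi fun i => B (v i)) := by
  set Φ := LinearMap.pi fun i => B (v i)
  have hker : LinearMap.ker Φ ≤ B.orthogonal (Submodule.span K (Set.range v)) := by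
    intro y hy n hn
    have hspan : Submodule.span K (Set.range v) ≤ LinearMap.ker (B.flip y) :=
      Submodule.span_le.2 (by rintro _ ⟨i, rfl⟩; exact congrFun hy i)
    exact hspan hn
  have h1 := LinearMap.finrank_range_add_finrank_ker Φ
  have h2 := Submodule.finrank_mono hker
  rw [LinearMap.BilinForm.finrank_orthogonal hB, finrank_span_eq_card hv] at h2
  have h3 := hv.fintype_card_le_finrank
  rw [← LinearMap.range_eq_top]
  apply Submodule.eq_top_of_finrank_eq
  rw [Module.finrank_fintype_fun_eq_card]
  have h4 := (LinearMap.range Φ).finrank_le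
  rw [Module.finrank_fintype_fun_eq_card] at h4
  omega

theorem LinearMap.finrank_comap_le (f : V →ₗ[K] W) (p : Submodule K W)
    [FiniteDimensional K p] :
    finrank K (p.comap f) ≤ finrank K p + finrank K (LinearMap.ker f) := by
  have := LinearMap.lift_rank_comap_le (f := f) p
  rw [← finrank_eq_rank, ← finrank_eq_rank, ← finrank_eq_rank] at this
  simp only [Cardinal.lift_natCast] at this
  exact_mod_cast this

theorem finrank_le_card_add_finrank_ker_of_mapsTo [Fintype ι] {Φ : V →ₗ[K] ι → K}
    (hΦ : Function.Surjective Φ) {c : ι → K} (hc : c ≠ 0) {T : V →ₗ[K] W} {x : W}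
    (hT : ∀ y, Φ y = c → T y ∈ K ∙ x) :
    finrank K V ≤ Fintype.card ι + finrank K (LinearMap.ker T) := by
  obtain ⟨y₀, hy₀⟩ := hΦ c
  set U := (K ∙ x).comap T
  have hy₀U : y₀ ∈ U := hT y₀ hy₀
  have hker : LinearMap.ker Φ ≤ U := fun y hy => by
    simpa using U.sub_mem (hT (y₀ + y) (by simp [hy₀, LinearMap.mem_ker.1 hy])) hy₀U
  have hlt : LinearMap.ker Φ < U :=
    SetLike.lt_iff_le_and_exists.2 ⟨hker, y₀, hy₀U, by simpa [hy₀] using hc⟩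
  have h1 := LinearMap.finrank_range_add_finrank_ker Φ
  rw [LinearMap.range_eq_top.2 hΦ, finrank_top, Module.finrank_fintype_fun_eq_card] at h1
  have h2 := Submodule.finrank_lt_finrank_of_lt hlt
  have h3 : finrank K U ≤ _ := LinearMap.finrank_comap_le T (K ∙ x)
  have h4 : finrank K (K ∙ x) ≤ 1 := (finrank_span_le_card {x}).trans (by simp)
  omega

end LinearAlgebra

section Skew

variable {V : Type*} [AddCommGroup V] [Module ℝ V] {g : LinearMap.BilinForm ℝ V}

theorem apply_self_eq_zero_of_skew (hsymm : ∀ x y, g x y = g y x) {f : V →ₗ[ℝ] V}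
    (hf : ∀ x y, g (f x) y = - g x (f y)) (x : V) : g (f x) x = 0 := by
  linarith [hf x x, hsymm x (f x)]

theorem skew_sum_smul {ι : Type*} [Fintype ι] {f : ι → V →ₗ[ℝ] V}
    (hf : ∀ i, ∀ x y, g (f i x) y = - g x (f i y)) (a : ι → ℝ) (x y : V) :
    g ((∑ i, a i • f i) x) y = - g x ((∑ i, a i • f i) y) := by
  simp [LinearMap.sum_apply, map_sum, hf, Finset.sum_neg_distrib]

theorem isotropic_eigenspace_of_skew {f : V →ₗ[ℝ] V} (hf : ∀ x y, g (f x) y = - g x (f y))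
    {t : ℝ} (ht : t ≠ 0) :
    ∀ u ∈ Module.End.eigenspace f t, ∀ v ∈ Module.End.eigenspace f t, g u v = 0 := by
  intro u hu v hv
  have h := hf u v
  rw [Module.End.mem_eigenspace_iff.1 hu, Module.End.mem_eigenspace_iff.1 hv, map_smul,
    map_smul, LinearMap.smul_apply, smul_eq_mul] at h
  have : t * g u v = 0 := by linarith
  exact (mul_eq_zero.1 this).resolve_left ht

end Skew

section Clifford

variable {ι V : Type*} [Fintype ι] [DecidableEq ι] [AddCommGroup V] [Module ℝ V]
  {J : ι → V →ₗ[ℝ] V}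

theorem sum_smul_comp_sum_smul_of_clifford
    (hJ : ∀ i j, J i ∘ₗ J j + J j ∘ₗ J i = ((if i = j then 2 else 0 : ℝ) • LinearMap.id))
    (a : ι → ℝ) :
    (∑ i, a i • J i) ∘ₗ (∑ i, a i • J i) = (∑ i, a i ^ 2) • LinearMap.id := by
  have hS : (∑ i, a i • J i) ∘ₗ (∑ i, a i • J i) = ∑ i, ∑ j, (a i * a j) • (J i ∘ₗ J j) := by
    simp only [← Module.End.mul_eq_comp, Finset.sum_mul, Finset.mul_sum, smul_mul_smul_comm]
    exact Finset.sum_comm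
  have hS' : (∑ i, a i • J i) ∘ₗ (∑ i, a i • J i) = ∑ i, ∑ j, (a i * a j) • (J j ∘ₗ J i) := by
    rw [hS, Finset.sum_comm]
    simp only [mul_comm]
  apply smul_right_injective _ (two_ne_zero (α := ℝ))
  calc (2 : ℝ) • ((∑ i, a i • J i) ∘ₗ (∑ i, a i • J i))
      = ∑ i, ∑ j, (a i * a j) • (J i ∘ₗ J j + J j ∘ₗ J i) := by
        rw [two_smul]
        nth_rewrite 1 [hS]
        rw [hS']
        simp only [smul_add, Finset.sum_add_distrib]
    _ = (2 : ℝ) • ((∑ i, a i ^ 2) • LinearMap.id) := by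
        simp [hJ, smul_smul, Finset.sum_smul, Finset.smul_sum, sq, mul_comm]

theorem linearIndependent_apply_of_clifford
    (hJ : ∀ i j, J i ∘ₗ J j + J j ∘ₗ J i = ((if i = j then 2 else 0 : ℝ) • LinearMap.id))
    {x : V} (hx : x ≠ 0) : LinearIndependent ℝ fun i => J i x := by
  rw [Fintype.linearIndependent_iff]
  intro a ha
  have hsq : (∑ i, a i ^ 2) • x = 0 := by
    rw [← LinearMap.id_apply (R := ℝ) x, ← LinearMap.smul_apply,
      ← sum_smul_comp_sum_smul_of_clifford hJ a, LinearMap.comp_apply]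
    simp [LinearMap.sum_apply, ha]
  have := (smul_eq_zero.1 hsq).resolve_right hx
  simpa using (Finset.sum_eq_zero_iff_of_nonneg fun i _ => sq_nonneg (a i)).1 this

end Clifford

def IsTotallyJacobiDual {K V : Type*} [CommRing K] [AddCommGroup V] [Module K V]
    (Jac : V → V →ₗ[K] V) : Prop :=
  ∀ X Y : V, X ≠ 0 → (∃ lam : K, Module.End.HasEigenvector (Jac X) lam Y) →
    ∃ lam : K, Module.End.HasEigenvector (Jac Y) lam X

theorem IsTotallyJacobiDual.apply_mem_span_of_apply_eq_zero {K V : Type*} [CommRing K]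
    [AddCommGroup V] [Module K V] {Jac : V → V →ₗ[K] V} (h : IsTotallyJacobiDual Jac) {X Y : V}
    (hX : X ≠ 0) (hY : Y ≠ 0) (hXY : Jac X Y = 0) : Jac Y X ∈ K ∙ X := by
  obtain ⟨lam, hlam⟩ := h X Y hX ⟨0, Module.End.mem_eigenspace_iff.2 (by simp [hXY]), hY⟩
  exact Submodule.mem_span_singleton.2 ⟨lam, hlam.apply_eq_smul.symm⟩

section Jacobi

variable {ι V : Type*} [Fintype ι] [AddCommGroup V] [Module ℝ V] {g : LinearMap.BilinForm ℝ V}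
  {J : ι → V →ₗ[ℝ] V} {μ₀ : ℝ} {μ : ι → ℝ} {R : V → V → V → V → ℝ} {Jac : V → V →ₗ[ℝ] V}

theorem jacobi_apply_eq (hsymm : ∀ x y, g x y = g y x) (hg : LinearMap.SeparatingLeft g)
    (hskew : ∀ i, ∀ x y : V, g (J i x) y = - g x (J i y))
    (hR : ∀ X Y Z W, R X Y Z W = μ₀ * R0 g X Y Z W + ∑ i, μ i * RJ g (J i) X Y Z W)
    (hJac : ∀ X Y Z, g (Jac X Y) Z = R Y X X Z) (X Y : V) :
    Jac X Y = μ₀ • (g X X • Y - g X Y • X) - ∑ i, (3 * μ i * g (J i X) Y) • J i X := by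
  refine sub_eq_zero.1 (hg _ fun Z => ?_)
  have hRJ : ∀ i, μ i * RJ g (J i) Y X X Z = -(3 * μ i * g (J i X) Y * g (J i X) Z) := by
    intro i
    rw [RJ, hskew i Y X, hsymm Y, apply_self_eq_zero_of_skew hsymm (hskew i)]
    ring
  simp only [LinearMap.sub_apply, map_sub, map_smul, map_sum, LinearMap.smul_apply,
    LinearMap.sum_apply, smul_eq_mul, hJac, hR, R0, hRJ, hsymm Y X, Finset.sum_neg_distrib]
  ring

variable {θ₀ : ℝ} {θ : ι → ℝ} {X Y : V}

theorem jacobi_apply_eq_zero (hsymm : ∀ x y, g x y = g y x) (hg : LinearMap.SeparatingLeft g)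
    (hskew : ∀ i, ∀ x y : V, g (J i x) y = - g x (J i y))
    (hR : ∀ X Y Z W, R X Y Z W = μ₀ * R0 g X Y Z W + ∑ i, μ i * RJ g (J i) X Y Z W)
    (hJac : ∀ X Y Z, g (Jac X Y) Z = R Y X X Z) (hXX : g X X = 0)
    (hdep : θ₀ • X + ∑ i, θ i • J i X = 0) (hXY : μ₀ * g X Y = θ₀)
    (hY : ∀ i, 3 * μ i * g (J i X) Y = θ i) : Jac X Y = 0 := by
  rw [jacobi_apply_eq hsymm hg hskew hR hJac, hXX]
  simp only [hY, zero_smul, zero_sub, smul_neg, smul_smul, hXY]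
  rw [← neg_add', hdep, neg_zero]

theorem jacobi_apply_swap_eq (hsymm : ∀ x y, g x y = g y x) (hg : LinearMap.SeparatingLeft g)
    (hskew : ∀ i, ∀ x y : V, g (J i x) y = - g x (J i y))
    (hR : ∀ X Y Z W, R X Y Z W = μ₀ * R0 g X Y Z W + ∑ i, μ i * RJ g (J i) X Y Z W)
    (hJac : ∀ X Y Z, g (Jac X Y) Z = R Y X X Z) (hXY : μ₀ * g X Y = θ₀)
    (hY : ∀ i, 3 * μ i * g (J i X) Y = θ i) :
    Jac Y X = (μ₀ * g Y Y) • X + ((∑ i, θ i • J i) - θ₀ • 1) Y := by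
  have hYX : ∀ i, 3 * μ i * g (J i Y) X = -θ i := by
    intro i
    rw [hskew, hsymm Y, ← hY]
    ring
  rw [jacobi_apply_eq hsymm hg hskew hR hJac]
  simp only [hYX, neg_smul, Finset.sum_neg_distrib, LinearMap.sub_apply, LinearMap.smul_apply,
    LinearMap.sum_apply, Module.End.one_apply, smul_sub, smul_smul, hsymm Y X, hXY]
  abel

end Jacobi

section AntiClifford

variable {ι V : Type*} [Fintype ι] [AddCommGroup V] [Module ℝ V] {g : LinearMap.BilinForm ℝ V}
  {J : ι → V →ₗ[ℝ] V} {μ₀ : ℝ} {μ : ι → ℝ} {θ₀ : ℝ} {θ : ι → ℝ} {X Y : V}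

theorem mul_apply_eq_of_linear_dependence (hμ : ∀ i, μ i ≠ 0) (hθ₀ : θ₀ ≠ 0)
    (hdep : θ₀ • X + ∑ i, θ i • J i X = 0) (hcond₁ : θ₀ ^ 2 = ∑ i, θ i ^ 2)
    (hcond₂ : (∑ i, θ i ^ 2) = -μ₀ * ∑ i, θ i ^ 2 / (3 * μ i))
    (hY : ∀ i, 3 * μ i * g (J i X) Y = θ i) : μ₀ * g X Y = θ₀ := by
  have h := congrArg (fun v => g v Y) hdep
  simp only [map_add, map_smul, map_sum, LinearMap.add_apply, LinearMap.smul_apply,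
    LinearMap.sum_apply, smul_eq_mul, map_zero, LinearMap.zero_apply] at h
  have hterm : ∀ i, θ i * g (J i X) Y = θ i ^ 2 / (3 * μ i) := by
    intro i
    rw [← hY i]
    field_simp [hμ i]
  rw [Finset.sum_congr rfl fun i _ => hterm i] at h
  apply mul_left_cancel₀ hθ₀
  linear_combination μ₀ * h - hcond₁ - hcond₂

variable {R : V → V → V → V → ℝ} {Jac : V → V →ₗ[ℝ] V}

theorem IsTotallyJacobiDual.sub_smul_one_apply_mem_span (hdual : IsTotallyJacobiDual Jac)
    (hsymm : ∀ x y, g x y = g y x) (hg : LinearMap.SeparatingLeft g)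
    (hskew : ∀ i, ∀ x y : V, g (J i x) y = - g x (J i y))
    (hR : ∀ X Y Z W, R X Y Z W = μ₀ * R0 g X Y Z W + ∑ i, μ i * RJ g (J i) X Y Z W)
    (hJac : ∀ X Y Z, g (Jac X Y) Z = R Y X X Z) (hμ : ∀ i, μ i ≠ 0) (hθ₀ : θ₀ ≠ 0)
    (hX : X ≠ 0) (hXX : g X X = 0) (hdep : θ₀ • X + ∑ i, θ i • J i X = 0)
    (hcond₁ : θ₀ ^ 2 = ∑ i, θ i ^ 2)
    (hcond₂ : (∑ i, θ i ^ 2) = -μ₀ * ∑ i, θ i ^ 2 / (3 * μ i))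
    (hY : ∀ i, 3 * μ i * g (J i X) Y = θ i) :
    ((∑ i, θ i • J i) - θ₀ • 1) Y ∈ ℝ ∙ X := by
  have hXY := mul_apply_eq_of_linear_dependence hμ hθ₀ hdep hcond₁ hcond₂ hY
  have hY0 : Y ≠ 0 := by
    rintro rfl
    simp [hθ₀.symm] at hXY
  have hmem := hdual.apply_mem_span_of_apply_eq_zero hX hY0
    (jacobi_apply_eq_zero hsymm hg hskew hR hJac hXX hdep hXY hY)
  rw [jacobi_apply_swap_eq hsymm hg hskew hR hJac hXY hY] at hmem
  simpa using (ℝ ∙ X).sub_mem hmem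
    ((ℝ ∙ X).smul_mem (μ₀ * g Y Y) (Submodule.mem_span_singleton_self X))

end AntiClifford

/-- Theorem 9 of the paper: an anti-Clifford algebraic curvature tensor
(`JᵢJⱼ + JⱼJᵢ = 2δᵢⱼ id`, `μᵢ ≠ 0`) of dimension `n > 2m`, for which there are
`θ₀, …, θ_m`, not all zero, and a null `X ≠ 0` with `θ₀X + θ₁J₁X + ⋯ + θ_mJ_mX = 0`,
`θ₀² = ∑ θᵢ² = −μ₀ ∑ θᵢ²/(3μᵢ)`, is not totally Jacobi-dual. -/
theorem antiClifford_not_totally_jacobiDual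
    {V : Type*} [AddCommGroup V] [Module ℝ V] [FiniteDimensional ℝ V]
    (g : LinearMap.BilinForm ℝ V) (hsymm : ∀ x y, g x y = g y x) (hnd : g.Nondegenerate)
    {m : ℕ} (μ₀ : ℝ) (μ : Fin m → ℝ) (J : Fin m → V →ₗ[ℝ] V)
    (hskew : ∀ i, ∀ x y : V, g (J i x) y = - g x (J i y))
    (hhur : ∀ i j, J i ∘ₗ J j + J j ∘ₗ J i
      = ((if i = j then 2 else 0 : ℝ) • LinearMap.id : V →ₗ[ℝ] V))
    (hμ : ∀ i, μ i ≠ 0)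
    (n : ℕ) (hn : Module.finrank ℝ V = n) (hnm : n > 2 * m)
    (R : V → V → V → V → ℝ)
    (hR : ∀ X Y Z W, R X Y Z W = μ₀ * R0 g X Y Z W + ∑ i, μ i * RJ g (J i) X Y Z W)
    (Jac : V → V →ₗ[ℝ] V)
    (hJac : ∀ X Y Z, g (Jac X Y) Z = R Y X X Z)
    (θ₀ : ℝ) (θ : Fin m → ℝ) (hθ : ¬ (θ₀ = 0 ∧ ∀ i, θ i = 0))
    (X : V) (hX0 : X ≠ 0) (hXnull : g X X = 0)
    (hdep : θ₀ • X + ∑ i, θ i • J i X = 0)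
    (hcond₁ : θ₀ ^ 2 = ∑ i, θ i ^ 2)
    (hcond₂ : (∑ i, θ i ^ 2) = -μ₀ * ∑ i, θ i ^ 2 / (3 * μ i)) :
    ¬ (∀ X Y : V, X ≠ 0 →
        (∃ lam : ℝ, Module.End.HasEigenvector (Jac X) lam Y) →
        ∃ lam : ℝ, Module.End.HasEigenvector (Jac Y) lam X) := by
  intro hdual
  have hθ₀ : θ₀ ≠ 0 := by
    rintro rfl
    refine hθ ⟨rfl, fun i => pow_eq_zero_iff two_ne_zero |>.1 ?_⟩
    exact congrFun ((Fintype.sum_eq_zero_iff_of_nonneg fun i => sq_nonneg (θ i)).1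
      (by simpa using hcond₁.symm)) i
  have hθne : θ ≠ 0 := fun h => hθ₀ (by simpa [h] using hcond₁)
  have hindep : LinearIndependent ℝ fun i => (3 * μ i) • J i X :=
    (linearIndependent_apply_of_clifford hhur hX0).units_smul
      fun i => Units.mk0 (3 * μ i) (mul_ne_zero three_ne_zero (hμ i))
  have hT : ∀ Y, (LinearMap.pi fun i => g ((3 * μ i) • J i X)) Y = θ →
      ((∑ i, θ i • J i) - θ₀ • 1) Y ∈ ℝ ∙ X := fun Y hY =>
    IsTotallyJacobiDual.sub_smul_one_apply_mem_span hdual hsymm hnd.1 hskew hR hJac hμ hθ₀ hX0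
      hXnull hdep hcond₁ hcond₂ fun i => by simpa using congrFun hY i
  have hcount := finrank_le_card_add_finrank_ker_of_mapsTo
    (surjective_pi_apply_of_linearIndependent hnd hindep) hθne hT
  have hiso := two_mul_finrank_le_of_isotropic hnd
    (isotropic_eigenspace_of_skew (skew_sum_smul hskew θ) hθ₀)
  rw [Module.End.eigenspace_def] at hiso
  simp only [Fintype.card_fin] at hcount
  omega
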